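/- Let S = ℝ[x,y,z] and let J = ⟨x^{s+1-i} y^i z^i : 0 ≤ i ≤ s-r⟩ for integers 0 ≤ r ≤ s. Then for every d ≥ 0, the dimension of the degree-d homogeneous component of S/J equals C(d+2,2) - Σ_{i=0}^{s-r} C(d-s-i+1,2) + Σ_{i=1}^{s-r} C(d-s-i,2), where C(a,b) denotes the binomial coefficient with the convention C(a,b)=0 when a<b. -/

import Mathlib

open MvPolynomial

noncomputable section

/-- `S = ℝ[x,y,z]`. -/
abbrev S3 := MvPolynomial (Fin 3) ℝ

/-- Binomial coefficient `C(a,2)` with the convention `C(a,2) = 0` for `a < 2`. -/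
def bin2 (a : ℤ) : ℤ := (a.toNat.choose 2 : ℤ)

open Finset

def mk3 (a b c : ℕ) : Fin 3 →₀ ℕ :=
  Finsupp.single 0 a + Finsupp.single 1 b + Finsupp.single 2 c

@[simp] lemma mk3_apply0 (a b c : ℕ) : mk3 a b c 0 = a := by simp [mk3]
@[simp] lemma mk3_apply1 (a b c : ℕ) : mk3 a b c 1 = b := by simp [mk3]
@[simp] lemma mk3_apply2 (a b c : ℕ) : mk3 a b c 2 = c := by simp [mk3]

lemma mk3_le_iff (a b c : ℕ) (m : Fin 3 →₀ ℕ) :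
    mk3 a b c ≤ m ↔ a ≤ m 0 ∧ b ≤ m 1 ∧ c ≤ m 2 := by
  rw [Finsupp.le_def]
  constructor
  · intro h; exact ⟨by simpa using h 0, by simpa using h 1, by simpa using h 2⟩
  · rintro ⟨h0, h1, h2⟩ i
    fin_cases i <;> simpa

lemma eq_mk3 (m : Fin 3 →₀ ℕ) : m = mk3 (m 0) (m 1) (m 2) := by
  ext i; fin_cases i <;> simp

lemma degree_eq (m : Fin 3 →₀ ℕ) : m.degree = m 0 + m 1 + m 2 := by
  have : m.degree = ∑ i : Fin 3, m i := by
    rw [Finsupp.degree]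
    exact Finset.sum_subset (Finset.subset_univ _)
      (fun x _ hx => Finsupp.notMem_support_iff.mp hx)
  rw [this, Fin.sum_univ_three]

def D3 (n : ℕ) : Finset (Fin 3 →₀ ℕ) := Finset.finsuppAntidiag Finset.univ n

lemma mem_D3 {n : ℕ} {m : Fin 3 →₀ ℕ} : m ∈ D3 n ↔ m 0 + m 1 + m 2 = n := by
  rw [D3, Finset.mem_finsuppAntidiag]
  constructor
  · rintro ⟨h, -⟩; rw [← h, Fin.sum_univ_three]
  · intro h; exact ⟨by rw [Fin.sum_univ_three, h], Finset.subset_univ _⟩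

lemma sum_range_succ_choose (n : ℕ) : ∑ k ∈ range (n+1), (k+1) = (n+2).choose 2 := by
  induction n with
  | zero => simp
  | succ n ih =>
    rw [Finset.sum_range_succ, ih]
    have h := Nat.choose_succ_succ' (n+2) 1
    rw [Nat.choose_one_right] at h
    norm_num at h
    rw [show n+1+2 = n+3 from by omega, show n+2+1 = n+3 from by omega] at *
    omega

lemma card_D3 (n : ℕ) : (D3 n).card = (n+2).choose 2 := by
  have h : (D3 n).card = ((range (n+1)).biUnion (fun k => Finset.HasAntidiagonal.antidiagonal k)).card := by
    apply Finset.card_nbij' (fun m => (m 0, m 1))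
      (fun p => mk3 p.1 p.2 (n - p.1 - p.2))
    · intro m hm
      rw [Finset.mem_coe, mem_D3] at hm
      simp only [Finset.mem_coe, Finset.mem_biUnion, Finset.mem_range, Finset.HasAntidiagonal.mem_antidiagonal]
      exact ⟨m 0 + m 1, by omega, by simp⟩
    · intro p hp
      simp only [Finset.mem_coe, Finset.mem_biUnion, Finset.mem_range, Finset.HasAntidiagonal.mem_antidiagonal] at hp
      obtain ⟨k, hk, hpk⟩ := hp
      rw [Finset.mem_coe, mem_D3]; simp only [mk3_apply0, mk3_apply1, mk3_apply2]; omega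
    · intro m hm
      rw [Finset.mem_coe, mem_D3] at hm
      conv_rhs => rw [eq_mk3 m]
      simp only [mk3_apply0, mk3_apply1, mk3_apply2]
      congr 1
      omega
    · intro p hp
      simp only [Finset.mem_coe, Finset.mem_biUnion, Finset.mem_range, Finset.HasAntidiagonal.mem_antidiagonal] at hp
      simp
  rw [h, Finset.card_biUnion ?_, ← sum_range_succ_choose]
  · apply Finset.sum_congr rfl; intro k _; rw [Finset.Nat.card_antidiagonal]
  case _ =>
    intro x _ y _ hxy
    simp only [Finset.disjoint_left]
    intro a ha hb
    rw [Finset.HasAntidiagonal.mem_antidiagonal] at ha hb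
    exact hxy (ha ▸ hb ▸ rfl)

attribute [local instance] Classical.propDecidable

lemma card_D3_filter (a b c n : ℕ) :
    ((D3 n).filter (fun m => mk3 a b c ≤ m)).card
      = if a + b + c ≤ n then (n - (a+b+c) + 2).choose 2 else 0 := by
  split_ifs with h
  · rw [← card_D3]
    apply Finset.card_nbij' (fun m => mk3 (m 0 - a) (m 1 - b) (m 2 - c))
        (fun m => mk3 (m 0 + a) (m 1 + b) (m 2 + c))
    · intro m hm
      simp only [Finset.mem_coe, Finset.mem_filter, mem_D3, mk3_le_iff] at hm
      rw [Finset.mem_coe, mem_D3]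
      simp only [mk3_apply0, mk3_apply1, mk3_apply2]
      omega
    · intro m hm
      rw [Finset.mem_coe, mem_D3] at hm
      simp only [Finset.mem_coe, Finset.mem_filter, mem_D3, mk3_le_iff, mk3_apply0, mk3_apply1, mk3_apply2]
      omega
    · intro m hm
      simp only [Finset.mem_coe, Finset.mem_filter, mem_D3, mk3_le_iff] at hm
      simp only [mk3_apply0, mk3_apply1, mk3_apply2]
      rw [show m 0 - a + a = m 0 from by omega, show m 1 - b + b = m 1 from by omega,
        show m 2 - c + c = m 2 from by omega]
      exact (eq_mk3 m).symm
    · intro m hm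
      rw [Finset.mem_coe, mem_D3] at hm
      simp only [mk3_apply0, mk3_apply1, mk3_apply2]
      rw [show m 0 + a - a = m 0 from by omega, show m 1 + b - b = m 1 from by omega,
        show m 2 + c - c = m 2 from by omega]
      exact (eq_mk3 m).symm
  · rw [Finset.card_eq_zero, Finset.filter_eq_empty_iff]
    intro m hm
    rw [mem_D3] at hm
    rw [mk3_le_iff]
    omega

lemma pointwise (s t : ℕ) (hts : t ≤ s) (m : Fin 3 →₀ ℕ) :
    (if ∃ i ∈ range (t+1), mk3 (s+1-i) i i ≤ m then (0:ℤ) else 1)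
      = 1 - (((range (t+1)).filter (fun i => mk3 (s+1-i) i i ≤ m)).card : ℤ)
          + (((Icc 1 t).filter (fun i => mk3 (s+2-i) i i ≤ m)).card : ℤ) := by
  have e1 : (range (t+1)).filter (fun i => mk3 (s+1-i) i i ≤ m)
      = Icc (s+1 - m 0) (min (min (m 1) (m 2)) t) := by
    ext i
    simp only [Finset.mem_filter, Finset.mem_range, Finset.mem_Icc, mk3_le_iff]
    omega
  have e2 : (Icc 1 t).filter (fun i => mk3 (s+2-i) i i ≤ m)
      = Icc (max 1 (s+2 - m 0)) (min (min (m 1) (m 2)) t) := by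
    ext i
    simp only [Finset.mem_filter, Finset.mem_Icc, mk3_le_iff]
    omega
  rw [e1, e2, Nat.card_Icc, Nat.card_Icc]
  split_ifs with hex
  · obtain ⟨i, hi, hle⟩ := hex
    rw [Finset.mem_range] at hi
    rw [mk3_le_iff] at hle
    omega
  · push_neg at hex
    have h := hex (min (min (m 1) (m 2)) t) (by rw [Finset.mem_range]; omega)
    rw [mk3_le_iff] at h
    omega

lemma count (s t d : ℕ) (hts : t ≤ s) :
    ((((D3 d).filter (fun m => ¬ ∃ i ∈ range (t+1), mk3 (s+1-i) i i ≤ m)).card : ℤ))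
      = bin2 ((d:ℤ)+2) - ∑ i ∈ range (t+1), bin2 ((d:ℤ) - s - i + 1)
        + ∑ i ∈ Icc 1 t, bin2 ((d:ℤ) - s - i) := by
  have step1 : ((((D3 d).filter (fun m => ¬ ∃ i ∈ range (t+1), mk3 (s+1-i) i i ≤ m)).card : ℤ))
      = ∑ m ∈ D3 d, (if ∃ i ∈ range (t+1), mk3 (s+1-i) i i ≤ m then (0:ℤ) else 1) := by
    rw [← Finset.sum_boole]
    simp_rw [ite_not]
  rw [step1]
  rw [Finset.sum_congr rfl (fun m _ => pointwise s t hts m)]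
  rw [Finset.sum_add_distrib, Finset.sum_sub_distrib, Finset.sum_const, nsmul_eq_mul, mul_one]
  congr 1
  congr 1
  · -- card D3 d = bin2 (d+2)
    rw [card_D3, bin2, show ((d:ℤ)+2).toNat = d + 2 from by omega]
  · -- ∑_m cardA
    have swap : ∑ m ∈ D3 d, (((range (t+1)).filter (fun i => mk3 (s+1-i) i i ≤ m)).card : ℤ)
        = ∑ i ∈ range (t+1), (((D3 d).filter (fun m => mk3 (s+1-i) i i ≤ m)).card : ℤ) := by
      simp_rw [Finset.card_filter]
      push_cast
      rw [Finset.sum_comm]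
    rw [swap]
    apply Finset.sum_congr rfl
    intro i hi
    rw [Finset.mem_range] at hi
    rw [card_D3_filter]
    rw [show (s+1-i) + i + i = s + 1 + i from by omega]
    split_ifs with h
    · rw [bin2, show ((d:ℤ) - s - i + 1).toNat = d - (s+1+i) + 2 from by omega]
    · rw [bin2, Nat.choose_eq_zero_of_lt (by omega : ((d:ℤ) - s - i + 1).toNat < 2)]
  · have swap : ∑ m ∈ D3 d, (((Icc 1 t).filter (fun i => mk3 (s+2-i) i i ≤ m)).card : ℤ)
        = ∑ i ∈ Icc 1 t, (((D3 d).filter (fun m => mk3 (s+2-i) i i ≤ m)).card : ℤ) := by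
      simp_rw [Finset.card_filter]
      push_cast
      rw [Finset.sum_comm]
    rw [swap]
    apply Finset.sum_congr rfl
    intro i hi
    rw [Finset.mem_Icc] at hi
    rw [card_D3_filter]
    rw [show (s+2-i) + i + i = s + 2 + i from by omega]
    split_ifs with h
    · rw [bin2, show ((d:ℤ) - s - i).toNat = d - (s+2+i) + 2 from by omega]
    · rw [bin2, Nat.choose_eq_zero_of_lt (by omega : ((d:ℤ) - s - i).toNat < 2)]

/-- For `0 ≤ r ≤ s` and the ideal `J = ⟨x^{s+1-i} y^i z^i : 0 ≤ i ≤ s-r⟩` of `S = ℝ[x,y,z]`,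
the dimension of the degree-`d` homogeneous component of `S/J` equals
`C(d+2,2) - Σ_{i=0}^{s-r} C(d-s-i+1,2) + Σ_{i=1}^{s-r} C(d-s-i,2)`. -/

lemma monomial_mk3 (a b c : ℕ) :
    (monomial (mk3 a b c) (1:ℝ) : S3) = X 0 ^ a * X 1 ^ b * X 2 ^ c := by
  rw [X_pow_eq_monomial, X_pow_eq_monomial, X_pow_eq_monomial, monomial_mul, monomial_mul,
    mul_one, mul_one]
  rfl

theorem stmt0 (r s d : ℕ) (hrs : r ≤ s) :
    (Module.finrank ℝ
      ↥(Submodule.map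
          (Ideal.Quotient.mkₐ ℝ
            (Ideal.span {m : S3 | ∃ i ≤ s - r, m = X 0 ^ (s + 1 - i) * X 1 ^ i * X 2 ^ i})).toLinearMap
          (homogeneousSubmodule (Fin 3) ℝ d)) : ℤ)
      = bin2 ((d : ℤ) + 2)
        - ∑ i ∈ Finset.range (s - r + 1), bin2 ((d : ℤ) - s - i + 1)
        + ∑ i ∈ Finset.Icc 1 (s - r), bin2 ((d : ℤ) - s - i) := by
  have hset : {m : S3 | ∃ i ≤ s - r, m = X 0 ^ (s + 1 - i) * X 1 ^ i * X 2 ^ i}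
      = (fun g => monomial g (1:ℝ)) '' {g | ∃ i ≤ s - r, g = mk3 (s+1-i) i i} := by
    ext q
    simp only [Set.mem_setOf_eq, Set.mem_image]
    constructor
    · rintro ⟨i, hi, rfl⟩
      exact ⟨mk3 (s+1-i) i i, ⟨i, hi, rfl⟩, monomial_mk3 _ _ _⟩
    · rintro ⟨g, ⟨i, hi, rfl⟩, rfl⟩
      exact ⟨i, hi, monomial_mk3 _ _ _⟩
  rw [hset]
  set t := s - r with ht
  set Jid : Ideal S3 := Ideal.span ((fun g => monomial g (1:ℝ)) '' {g | ∃ i ≤ t, g = mk3 (s+1-i) i i}) with hJ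
  set f := (Ideal.Quotient.mkₐ ℝ Jid).toLinearMap with hf
  set T : Finset (Fin 3 →₀ ℕ) :=
    (D3 d).filter (fun m => ¬ ∃ i ∈ Finset.range (t+1), mk3 (s+1-i) i i ≤ m) with hT
  have hmemJ : ∀ p : S3, p ∈ Jid ↔ ∀ u ∈ p.support, ∃ i ≤ t, mk3 (s+1-i) i i ≤ u := by
    intro p
    rw [hJ, mem_ideal_span_monomial_image]
    constructor
    · intro h u hu
      obtain ⟨si, ⟨i, hi, rfl⟩, hle⟩ := h u hu
      exact ⟨i, hi, hle⟩
    · intro h u hu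
      obtain ⟨i, hi, hle⟩ := h u hu
      exact ⟨_, ⟨i, hi, rfl⟩, hle⟩
  have hTmem : ∀ {u : Fin 3 →₀ ℕ},
      u ∈ T ↔ (u 0 + u 1 + u 2 = d ∧ ¬ ∃ i ≤ t, mk3 (s+1-i) i i ≤ u) := by
    intro u
    simp only [hT, Finset.mem_filter, mem_D3]
    constructor
    · rintro ⟨h1, h2⟩
      exact ⟨h1, fun ⟨i, hi, hle⟩ => h2 ⟨i, Finset.mem_range.mpr (by omega), hle⟩⟩
    · rintro ⟨h1, h2⟩
      exact ⟨h1, fun ⟨i, hi, hle⟩ => h2 ⟨i, Nat.lt_succ_iff.mp (Finset.mem_range.mp hi), hle⟩⟩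
  have hfmk : ∀ p : S3, f p = Ideal.Quotient.mk Jid p := fun p => rfl
  set v : {m // m ∈ T} → (S3 ⧸ Jid) := fun m => f (monomial (m : Fin 3 →₀ ℕ) (1:ℝ)) with hv
  have hli : LinearIndependent ℝ v := by
    rw [linearIndependent_iff']
    intro F g hsum i hiF
    set p : S3 := ∑ j ∈ F, g j • monomial (j : Fin 3 →₀ ℕ) (1:ℝ) with hp
    have hmk : f p = 0 := by
      rw [hp, map_sum]
      simp_rw [map_smul]
      exact hsum
    have hpJ : p ∈ Jid := by
      rw [hfmk] at hmk
      rwa [Ideal.Quotient.eq_zero_iff_mem] at hmk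
    have hcoeff : coeff (i : Fin 3 →₀ ℕ) p = g i := by
      rw [hp, coeff_sum]
      rw [Finset.sum_eq_single i]
      · rw [coeff_smul, coeff_monomial, if_pos rfl, smul_eq_mul, mul_one]
      · intro j _ hji
        rw [coeff_smul, coeff_monomial, if_neg (fun h => hji (Subtype.ext h)), smul_zero]
      · intro h
        exact absurd hiF h
    by_contra hgi
    have hsup : (i : Fin 3 →₀ ℕ) ∈ p.support := by
      rw [mem_support_iff, hcoeff]
      exact hgi
    obtain ⟨k, hk, hle⟩ := (hmemJ p).mp hpJ _ hsup
    exact (hTmem.mp i.2).2 ⟨k, hk, hle⟩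
  have hspan : Submodule.map f (homogeneousSubmodule (Fin 3) ℝ d)
      = Submodule.span ℝ (Set.range v) := by
    apply le_antisymm
    · rintro q hq
      obtain ⟨p, hp, rfl⟩ := hq
      rw [SetLike.mem_coe, mem_homogeneousSubmodule] at hp
      rw [show p = ∑ u ∈ p.support, monomial u (coeff u p) from (support_sum_monomial_coeff p).symm,
        map_sum]
      apply Submodule.sum_mem
      intro u hu
      have hud : u 0 + u 1 + u 2 = d := by
        have h1 := hp (mem_support_iff.mp hu)
        replace h1 : Finsupp.degree u = d := by rw [Finsupp.degree_eq_weight_one]; exact h1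
        rw [← degree_eq]
        exact h1
      by_cases hdvd : ∃ k ≤ t, mk3 (s+1-k) k k ≤ u
      · have hz : f (monomial u (coeff u p)) = 0 := by
          have hm : monomial u (coeff u p) ∈ Jid := by
            rw [hmemJ]
            intro w hw
            have hwu : w = u := Finset.mem_singleton.mp (support_monomial_subset hw)
            subst hwu
            exact hdvd
          rw [hfmk, Ideal.Quotient.eq_zero_iff_mem]
          exact hm
        rw [hz]
        exact Submodule.zero_mem _
      · have huT : u ∈ T := hTmem.mpr ⟨hud, hdvd⟩
        have he : f (monomial u (coeff u p)) = (coeff u p) • v ⟨u, huT⟩ := by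
          rw [hv, ← map_smul]
          congr 1
          rw [smul_monomial, smul_eq_mul, mul_one]
        rw [he]
        exact Submodule.smul_mem _ _ (Submodule.subset_span ⟨⟨u, huT⟩, rfl⟩)
    · rw [Submodule.span_le]
      rintro _ ⟨m, rfl⟩
      exact ⟨monomial (m : Fin 3 →₀ ℕ) 1,
        isHomogeneous_monomial _ (by rw [degree_eq]; exact (hTmem.mp m.2).1), rfl⟩
  rw [hspan, finrank_span_eq_card hli, Fintype.card_coe]
  exact count s t d (by omega)
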